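/- The function $A_3(-s,s) := \zeta(3)\, \zeta(\tfrac{3}{2} - 3s) \prod_p \Big( 1 - \frac{1}{p^{3/2+s}} + \frac{1}{p^{5/2-s}} - \frac{1}{p^{5/2-3s}} - \frac{1}{p^{3-4s}} + \frac{1}{p^{9/2-5s}} \Big)$ is meromorphic on the strip $|\mathrm{Re}(s)| < 1/2$, with the Euler product converging absolutely there; its only pole in that strip is a simple pole at $s = 1/6$, with residue $-\frac{\zeta(3)}{3\, \zeta(5/3)\, \zeta(2)}$. -/

import Mathlib

/-!
On `|Re s| ≤ σ ≤ 1/2` each of the five non-constant terms of the Euler factor has norm at most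
`p ^ (-(3/2 - σ))`, and `3/2 - σ > 1` once `σ < 1/2`. Hence the product converges absolutely and
locally uniformly on the open strip, so it is holomorphic there. The pole comes from
`ζ(3/2 - 3s)` alone: writing `ζ w = ζ₁ w / (w - 1)` with `ζ₁` entire and `ζ₁ 1 = 1`, the
function `A₃(-s,s) · (s - 1/6)` extends holomorphically. At `s = 1/6` the Euler factor splits
as `(1 - p^(-5/3)) (1 - p^(-2))`, so the product equals `ζ(5/3)⁻¹ ζ(2)⁻¹`.
-/

/-- The local Euler factor of `A₃(-s,s)` at the prime `p`. -/
noncomputable def A3local (s : ℂ) (p : ℕ) : ℂ :=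
  1 - (p : ℂ) ^ (-(3/2 + s)) + (p : ℂ) ^ (-(5/2 - s)) - (p : ℂ) ^ (-(5/2 - 3*s))
    - (p : ℂ) ^ (-(3 - 4*s)) + (p : ℂ) ^ (-(9/2 - 5*s))

/-- The analytic continuation of `A₃(-s,s)` given by its product formula. -/
noncomputable def A3diag (s : ℂ) : ℂ :=
  riemannZeta 3 * riemannZeta (3/2 - 3*s) * ∏' p : Nat.Primes, A3local s (p : ℕ)

open Complex

lemma norm_natCast_cpow_neg_le {n : ℕ} (hn : 1 ≤ n) {w : ℂ} {a : ℝ} (ha : a ≤ w.re) :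
    ‖(n : ℂ) ^ (-w)‖ ≤ (n : ℝ) ^ (-a) := by
  rw [norm_natCast_cpow_of_pos (by omega), neg_re]
  exact Real.rpow_le_rpow_of_exponent_le (by exact_mod_cast hn) (by linarith)

lemma norm_A3local_sub_one_le {σ : ℝ} (hσ : σ ≤ 1/2) {s : ℂ} (hs : |s.re| ≤ σ) {n : ℕ}
    (hn : 1 ≤ n) : ‖A3local s n - 1‖ ≤ 5 * (n : ℝ) ^ (-(3/2 - σ)) := by
  obtain ⟨hlo, hhi⟩ := abs_le.mp hs
  obtain ⟨h₁, h₂, h₃, h₄, h₅⟩ : 3/2 - σ ≤ (3/2 + s).re ∧ 3/2 - σ ≤ (5/2 - s).re ∧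
      3/2 - σ ≤ (5/2 - 3*s).re ∧ 3/2 - σ ≤ (3 - 4*s).re ∧ 3/2 - σ ≤ (9/2 - 5*s).re := by
    simp only [add_re, sub_re, mul_re, re_ofNat, im_ofNat, div_ofNat_re, zero_mul, sub_zero]
    refine ⟨?_, ?_, ?_, ?_, ?_⟩ <;> linarith
  have hsplit : A3local s n - 1 = ((n : ℂ) ^ (-(5/2 - s)) + (n : ℂ) ^ (-(9/2 - 5*s)))
      - ((n : ℂ) ^ (-(3/2 + s)) + (n : ℂ) ^ (-(5/2 - 3*s)) + (n : ℂ) ^ (-(3 - 4*s))) := by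
    unfold A3local; ring
  rw [hsplit]
  refine (norm_sub_le _ _).trans ?_
  linarith [norm_natCast_cpow_neg_le hn h₁, norm_natCast_cpow_neg_le hn h₂,
    norm_natCast_cpow_neg_le hn h₃, norm_natCast_cpow_neg_le hn h₄,
    norm_natCast_cpow_neg_le hn h₅, norm_add_le ((n : ℂ) ^ (-(5/2 - s))) ((n : ℂ) ^ (-(9/2 - 5*s))),
    norm_add₃_le (a := (n : ℂ) ^ (-(3/2 + s))) (b := (n : ℂ) ^ (-(5/2 - 3*s)))
      (c := (n : ℂ) ^ (-(3 - 4*s)))]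

lemma summable_norm_A3local_sub_one {s : ℂ} (hs : |s.re| < 1/2) :
    Summable fun p : Nat.Primes => ‖A3local s p - 1‖ :=
  ((Nat.Primes.summable_rpow.mpr (by linarith)).mul_left 5).of_nonneg_of_le
    (fun _ => norm_nonneg _) fun p => norm_A3local_sub_one_le hs.le le_rfl p.prop.one_le

lemma differentiable_A3local {n : ℕ} (hn : n ≠ 0) : Differentiable ℂ fun s => A3local s n := by
  unfold A3local
  fun_prop (disch := exact Or.inl (Nat.cast_ne_zero.mpr hn))

lemma differentiableOn_tprod_A3local {σ : ℝ} (hσ : σ < 1/2) :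
    DifferentiableOn ℂ (fun s => ∏' p : Nat.Primes, A3local s p) {s | |s.re| < σ} := by
  have hU : IsOpen {s : ℂ | |s.re| < σ} := isOpen_lt (by fun_prop) continuous_const
  have hprod := Summable.hasProdLocallyUniformlyOn_one_add (f := fun (p : Nat.Primes) s =>
      A3local s p - 1) hU ((Nat.Primes.summable_rpow.mpr (by linarith)).mul_left 5)
    (.of_forall fun p s hs => norm_A3local_sub_one_le hσ.le hs.le p.prop.one_le)
    (fun p => ((differentiable_A3local p.prop.ne_zero).continuous.sub continuous_const).continuousOn)
  simp only [add_sub_cancel] at hprod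
  refine hprod.differentiableOn (.of_forall fun F => ?_) hU
  simpa [Finset.prod_fn] using
    (Differentiable.finsetProd fun p _ => differentiable_A3local p.prop.ne_zero).differentiableOn

lemma analyticOnNhd_tprod_A3local :
    AnalyticOnNhd ℂ (fun s => ∏' p : Nat.Primes, A3local s p) {s | |s.re| < 1/2} := by
  intro s hs
  obtain ⟨σ, hsσ, hσ⟩ := exists_between (α := ℝ) hs
  exact (differentiableOn_tprod_A3local hσ).analyticAt
    ((isOpen_lt (by fun_prop) continuous_const).mem_nhds hsσ)

lemma A3local_one_div_six {n : ℕ} (hn : n ≠ 0) :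
    A3local (1/6) n = (1 - (n : ℂ) ^ (-(5/3 : ℂ))) * (1 - (n : ℂ) ^ (-2 : ℂ)) := by
  have h : -(9/2 - 5 * (1/6 : ℂ)) = -(5/3) + -2 := by norm_num
  unfold A3local
  rw [h, cpow_add _ _ (Nat.cast_ne_zero.mpr hn)]
  ring_nf

lemma hasProd_one_sub_prime_cpow_neg {s : ℂ} (hs : 1 < s.re) :
    HasProd (fun p : Nat.Primes => 1 - (p : ℂ) ^ (-s)) (riemannZeta s)⁻¹ := by
  simpa only [inv_inv] using
    (riemannZeta_eulerProduct_hasProd hs).inv₀ (riemannZeta_ne_zero_of_one_lt_re hs)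

lemma tprod_A3local_one_div_six :
    ∏' p : Nat.Primes, A3local (1/6) p = (riemannZeta (5/3))⁻¹ * (riemannZeta 2)⁻¹ := by
  rw [tprod_congr fun p : Nat.Primes => A3local_one_div_six p.prop.ne_zero]
  exact ((hasProd_one_sub_prime_cpow_neg (by norm_num)).mul
    (hasProd_one_sub_prime_cpow_neg (by norm_num))).tprod_eq

theorem stmt12 :
    (∀ s : ℂ, |s.re| < 1/2 → Summable (fun p : Nat.Primes => ‖A3local s (p : ℕ) - 1‖)) ∧
    ∃ G : ℂ → ℂ, AnalyticOnNhd ℂ G {s : ℂ | |s.re| < 1/2} ∧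
      (∀ s : ℂ, |s.re| < 1/2 → s ≠ 1/6 → A3diag s = G s / (s - 1/6)) ∧
      G (1/6) = -(riemannZeta 3) / (3 * riemannZeta (5/3) * riemannZeta 2) := by
  refine ⟨fun _ => summable_norm_A3local_sub_one, fun s =>
    -(riemannZeta 3 / 3) * riemannZeta₁ (3/2 - 3*s) * ∏' p : Nat.Primes, A3local s p, ?_, ?_, ?_⟩
  · have hζ₁ : Differentiable ℂ fun s : ℂ => riemannZeta₁ (3/2 - 3*s) := by fun_prop
    exact (analyticOnNhd_const.mul fun s _ => hζ₁.analyticAt s).mul analyticOnNhd_tprod_A3local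
  · intro s _ hs
    have hw : (3/2 - 3*s : ℂ) ≠ 1 := fun h => hs (by linear_combination -h/3)
    rw [A3diag, riemannZeta_eq_inv_sub_mul hw, show (3/2 - 3*s - 1 : ℂ) = -3 * (s - 1/6) by ring]
    field_simp [sub_ne_zero.mpr hs]
  · norm_num [riemannZeta₁_one, tprod_A3local_one_div_six]
    field_simp
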